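/- arXiv:1708.00915 — 2 statements merged into one kernel-verified Lean document; each statement's English description precedes it below -/
import Mathlib

section
/- In the random model with B-irreducible probability matrices, the pathwise-defined sequence {ℓ_q} associated with {W(t)} satisfies Σ_{q=1}^∞ 1/n^{ℓ_q} = ∞ almost surely. -/
open Finset MeasureTheory

/-- `A_{S S̄} = ∑_{i ∈ S, j ∉ S} A i j`. -/
def flowSum {n : ℕ} (A : Matrix (Fin n) (Fin n) ℝ) (S : Finset (Fin n)) : ℝ :=
  ∑ i ∈ S, ∑ j ∈ Sᶜ, A i j

/-- `S` is a nontrivial subset of `[n]`. -/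
def NontrivialSubset {n : ℕ} (S : Finset (Fin n)) : Prop :=
  S.Nonempty ∧ S ≠ Finset.univ

/-- Directed infinite flow property: for every nontrivial `S`, `∑_t A_{S S̄}(t) = ∞`. -/
def DirectedInfiniteFlow {n : ℕ} (A : ℕ → Matrix (Fin n) (Fin n) ℝ) : Prop :=
  ∀ S : Finset (Fin n), NontrivialSubset S →
    Filter.Tendsto (fun T => ∑ t ∈ Finset.range T, flowSum (A t) S)
      Filter.atTop Filter.atTop

/-- The backward product `A(t:s) = A(t) A(t-1) ⋯ A(s)`. -/
def matProd {n : ℕ} (A : ℕ → Matrix (Fin n) (Fin n) ℝ) (t s : ℕ) :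
    Matrix (Fin n) (Fin n) ℝ :=
  (((List.range (t + 1 - s)).map fun k => A (t - k))).prod

/-- Row-stochastic nonnegative matrix. -/
def RowStochastic {n : ℕ} (A : Matrix (Fin n) (Fin n) ℝ) : Prop :=
  (∀ i j, 0 ≤ A i j) ∧ ∀ i, ∑ j, A i j = 1

/-- Column-stochastic nonnegative matrix. -/
def ColStochastic {n : ℕ} (A : Matrix (Fin n) (Fin n) ℝ) : Prop :=
  (∀ i j, 0 ≤ A i j) ∧ ∀ j, ∑ i, A i j = 1

/-- `W` is the degree-normalized adjacency matrix of a digraph with all self-loops: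
`W i j = 1 / (out-degree of j)` if there is an edge from `j` to `i`, else `0`. -/
def OutDegreeForm {n : ℕ} (W : Matrix (Fin n) (Fin n) ℝ) : Prop :=
  ∃ N : Fin n → Finset (Fin n), (∀ j, j ∈ N j) ∧
    ∀ i j, W i j = if i ∈ N j then (1 : ℝ) / (N j).card else 0

/-- Strong aperiodicity of a sequence of matrices. -/
def StronglyAperiodic {n : ℕ} (A : ℕ → Matrix (Fin n) (Fin n) ℝ) : Prop :=
  ∃ γ : ℝ, 0 < γ ∧ ∀ t i, γ ≤ A t i i

/-- The times `k_q`: `k_0 = 0` and `k_q` is the least `t' > k_{q-1}` with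
nonzero flow `∑_{t=k_{q-1}}^{t'-1} A_{S S̄}(t) > 0` across every nontrivial cut. -/
noncomputable def kSeq {n : ℕ} (A : ℕ → Matrix (Fin n) (Fin n) ℝ) : ℕ → ℕ
  | 0 => 0
  | q + 1 => sInf {t' : ℕ | kSeq A q < t' ∧ ∀ S : Finset (Fin n), NontrivialSubset S →
      0 < ∑ t ∈ Finset.Ico (kSeq A q) t', flowSum (A t) S}

/-- `ℓ_q = k_{qn} - k_{(q-1)n}`. -/
noncomputable def ellSeq {n : ℕ} (A : ℕ → Matrix (Fin n) (Fin n) ℝ) (q : ℕ) : ℕ :=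
  kSeq A (q * n) - kSeq A ((q - 1) * n)

/-- The index set `Q_{t,s} = {q ≥ 1 : s ≤ k_{(q-1)n}, k_{qn} ≤ t}` (as a `Finset`). -/
noncomputable def QSet {n : ℕ} (A : ℕ → Matrix (Fin n) (Fin n) ℝ) (t s : ℕ) :
    Finset ℕ :=
  (Finset.Icc 1 t).filter fun q => s ≤ kSeq A ((q - 1) * n) ∧ kSeq A (q * n) ≤ t

/-- `Λ_{t,s} = ∏_{q ∈ Q_{t,s}} (1 - 1/n^{ℓ_q})`. -/
noncomputable def Lam {n : ℕ} (A : ℕ → Matrix (Fin n) (Fin n) ℝ) (t s : ℕ) : ℝ :=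
  ∏ q ∈ QSet A t s, (1 - 1 / (n : ℝ) ^ (ellSeq A q))

/-- Push-sum iterates: `u(0) = u0`, `u(t+1) = W(t) u(t)`. -/
def pushIter {n : ℕ} (W : ℕ → Matrix (Fin n) (Fin n) ℝ) (u0 : Fin n → ℝ) : ℕ → Fin n → ℝ
  | 0 => u0
  | t + 1 => (W t).mulVec (pushIter W u0 t)

/-- A nonnegative matrix is irreducible if the digraph with an edge from `j` to `i`
whenever `A i j > 0` is strongly connected. -/
def IrreducibleMat {n : ℕ} (A : Matrix (Fin n) (Fin n) ℝ) : Prop :=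
  ∀ i j : Fin n, Relation.ReflTransGen (fun a b => 0 < A b a) i j


/-- The random column-stochastic matrix built from the Bernoulli variables `R`:
`W(t)(ω)_{ij} = R_{ij}(t)(ω) / ∑_k R_{kj}(t)(ω)`. -/
noncomputable def Wof {n : ℕ} {Ω : Type*} (R : ℕ → Fin n → Fin n → Ω → ℝ)
    (t : ℕ) (ω : Ω) : Matrix (Fin n) (Fin n) ℝ :=
  fun i j => R t i j ω / ∑ k, R t k j ω

/-!
A superblock of `2n` consecutive `B`-blocks is *realized* when every edge of positive
probability in it actually occurs. Realizations of disjoint superblocks are independent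
events of probability at least `ε ^ (2nB · n²)`, so by the second Borel–Cantelli lemma almost
surely infinitely many superblocks are realized. In a realized superblock, `B`-irreducibility
puts positive flow across every cut inside each `B`-block, so whenever `k_q` precedes a block,
`k_{q+1}` comes no later than the end of that block. The superblock therefore contains a whole
interval `[k_{(q-1)n}, k_{qn}]`, i.e. some `ℓ_q ≤ 2nB`, and infinitely many terms of the series
are at least `n ^ (-2nB)`.
-/

open Filter Function
open scoped ENNReal

section Deterministic

variable {n : ℕ} {A : ℕ → Matrix (Fin n) (Fin n) ℝ}

lemma flowSum_nonneg {M : Matrix (Fin n) (Fin n) ℝ} (hM : ∀ i j, 0 ≤ M i j)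
    (S : Finset (Fin n)) : 0 ≤ flowSum M S :=
  Finset.sum_nonneg fun i _ => Finset.sum_nonneg fun j _ => hM i j

/-- `kSeq A (q + 1)` is, by definition, the least `b > kSeq A q` with
`CrossesAllCuts A (kSeq A q) b`. -/
def CrossesAllCuts (A : ℕ → Matrix (Fin n) (Fin n) ℝ) (a b : ℕ) : Prop :=
  ∀ S : Finset (Fin n), NontrivialSubset S → 0 < ∑ t ∈ Finset.Ico a b, flowSum (A t) S

lemma CrossesAllCuts.mono (hA : ∀ t i j, 0 ≤ A t i j) {a b a' b' : ℕ}
    (h : CrossesAllCuts A a b) (ha : a' ≤ a) (hb : b ≤ b') : CrossesAllCuts A a' b' :=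
  fun S hS => (h S hS).trans_le <| Finset.sum_le_sum_of_subset_of_nonneg
    (Finset.Ico_subset_Ico ha hb) fun t _ _ => flowSum_nonneg (hA t) S

lemma kSeq_succ_le (hA : ∀ t i j, 0 ≤ A t i j) {q a b : ℕ} (hq : kSeq A q ≤ a)
    (hab : a < b) (h : CrossesAllCuts A a b) : kSeq A (q + 1) ≤ b :=
  Nat.sInf_le ⟨hq.trans_lt hab, h.mono hA hq le_rfl⟩

lemma kSeq_strictMono (h : ∀ a, ∃ b, a < b ∧ CrossesAllCuts A a b) : StrictMono (kSeq A) :=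
  strictMono_nat_of_lt_succ fun q => (Nat.sInf_mem (h (kSeq A q))).1

lemma kSeq_add_le (hA : ∀ t i j, 0 ≤ A t i j) {B : ℕ} (hB : 0 < B) {r c J : ℕ}
    (hr : kSeq A r ≤ c * B) (hc : ∀ j < J, CrossesAllCuts A ((c + j) * B) ((c + j + 1) * B)) :
    kSeq A (r + J) ≤ (c + J) * B := by
  induction J with
  | zero => simpa using hr
  | succ J ih =>
    exact kSeq_succ_le hA (ih fun j hj => hc j (by omega))
      (Nat.mul_lt_mul_of_pos_right (by omega) hB) (hc J (by omega))

lemma exists_ellSeq_le (hA : ∀ t i j, 0 ≤ A t i j) (hn : 0 < n) {B : ℕ} (hB : 0 < B)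
    (hk : StrictMono (kSeq A)) {c : ℕ}
    (hc : ∀ j < 2 * n, CrossesAllCuts A ((c + j) * B) ((c + j + 1) * B)) :
    ∃ q, c * B < kSeq A ((q - 1) * n) ∧ ellSeq A q ≤ 2 * n * B := by
  have hex : ∃ p, c * B < kSeq A (p * n) :=
    ⟨c * B + 1, calc c * B < c * B + 1 := Nat.lt_succ_self _
      _ ≤ (c * B + 1) * n := Nat.le_mul_of_pos_right _ hn
      _ ≤ kSeq A ((c * B + 1) * n) := hk.le_apply⟩
  -- `p + 1` is the least index with `c * B < kSeq A ((p + 1) * n)`.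
  obtain ⟨p, hp⟩ : ∃ p, Nat.find hex = p + 1 :=
    Nat.exists_eq_succ_of_ne_zero fun h0 => by simpa [h0, kSeq] using Nat.find_spec hex
  have hlow : kSeq A (p * n) ≤ c * B := not_lt.1 (Nat.find_min hex (by omega))
  have hup : kSeq A ((p + 2) * n) ≤ c * B + 2 * n * B := by
    have h := kSeq_add_le hA hB hlow hc
    rwa [← add_mul, add_mul c] at h
  have hmid : c * B < kSeq A ((p + 1) * n) := hp ▸ Nat.find_spec hex
  refine ⟨p + 2, hmid, ?_⟩
  show kSeq A ((p + 2) * n) - kSeq A ((p + 1) * n) ≤ 2 * n * B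
  omega

lemma frequently_ellSeq_le (hA : ∀ t i j, 0 ≤ A t i j) (hn : 0 < n) {B : ℕ} (hB : 0 < B)
    (hgood : ∃ᶠ c in atTop, ∀ j < 2 * n, CrossesAllCuts A ((c + j) * B) ((c + j + 1) * B)) :
    ∃ᶠ q in atTop, ellSeq A q ≤ 2 * n * B := by
  rw [frequently_atTop] at hgood ⊢
  have hk : StrictMono (kSeq A) := kSeq_strictMono fun a => by
    obtain ⟨c, hac, hc⟩ := hgood a
    have hcB : c ≤ c * B := Nat.le_mul_of_pos_right c hB
    exact ⟨(c + 1) * B, by nlinarith, (hc 0 (by omega)).mono hA (by simpa using hac.trans hcB)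
      le_rfl⟩
  intro N
  obtain ⟨c, hNc, hc⟩ := hgood (kSeq A (N * n))
  obtain ⟨q, hcq, hq⟩ := exists_ellSeq_le hA hn hB hk hc
  have hNq : N * n < (q - 1) * n :=
    hk.lt_iff_lt.1 ((hNc.trans (Nat.le_mul_of_pos_right c hB)).trans_lt hcq)
  exact ⟨q, by have := Nat.lt_of_mul_lt_mul_right hNq; omega, hq⟩

end Deterministic

lemma tendsto_sum_Icc_atTop_of_frequently_le {f : ℕ → ℝ} (hf : ∀ q, 0 ≤ f q) {δ : ℝ}
    (hδ : 0 < δ) (hfreq : ∃ᶠ q in atTop, δ ≤ f q) :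
    Tendsto (fun Q => ∑ q ∈ Finset.Icc 1 Q, f q) atTop atTop := by
  have hns : ¬Summable f := fun hs =>
    (hfreq.and_eventually (hs.tendsto_atTop_zero.eventually (gt_mem_nhds hδ))).exists.elim
      fun q hq => hq.1.not_gt hq.2
  have hrange := (not_summable_iff_tendsto_nat_atTop_of_nonneg hf).1 hns
  refine (tendsto_atTop_add_const_right _ (-f 0) (hrange.comp (tendsto_add_atTop_nat 1))).congr
    fun Q => ?_
  rw [Function.comp_apply, Finset.range_eq_Ico, Finset.sum_eq_sum_Ico_succ_bot Q.succ_pos,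
    zero_add, Nat.succ_eq_add_one, Finset.Ico_add_one_right_eq_Icc]
  ring

section Irreducible

variable {n : ℕ}

lemma IrreducibleMat.exists_pos_cross {M : Matrix (Fin n) (Fin n) ℝ} (hM : IrreducibleMat M)
    {S : Finset (Fin n)} (hS : NontrivialSubset S) : ∃ i ∈ S, ∃ j ∉ S, 0 < M i j := by
  obtain ⟨⟨y, hy⟩, hne⟩ := hS
  obtain ⟨x, -, hx⟩ := Finset.exists_of_ssubset (Finset.ssubset_univ_iff.2 hne)
  by_contra! h
  have hout : ∀ z, Relation.ReflTransGen (fun a b => 0 < M b a) x z → z ∉ S := fun z hz => by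
    induction hz with
    | refl => exact hx
    | tail _ hbc ih => exact fun hc => (h _ hc _ ih).not_gt hbc
  exact hout y (hM x y) hy

lemma flowSum_pos {M : Matrix (Fin n) (Fin n) ℝ} (hM : ∀ i j, 0 ≤ M i j)
    {S : Finset (Fin n)} {i j : Fin n} (hi : i ∈ S) (hj : j ∉ S) (h : 0 < M i j) :
    0 < flowSum M S :=
  Finset.sum_pos' (fun i' _ => Finset.sum_nonneg fun j' _ => hM i' j')
    ⟨i, hi, Finset.sum_pos' (fun j' _ => hM i j') ⟨j, Finset.mem_compl.2 hj, h⟩⟩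

lemma crossesAllCuts_of_irreducible {A P : ℕ → Matrix (Fin n) (Fin n) ℝ}
    (hA : ∀ t i j, 0 ≤ A t i j) {a b : ℕ} (hirr : IrreducibleMat (∑ t ∈ Finset.Ico a b, P t))
    (hsupp : ∀ t ∈ Finset.Ico a b, ∀ i j, 0 < P t i j → 0 < A t i j) :
    CrossesAllCuts A a b := by
  intro S hS
  obtain ⟨i, hi, j, hj, hij⟩ := hirr.exists_pos_cross hS
  rw [Matrix.sum_apply, ← Finset.sum_const_zero] at hij
  obtain ⟨t, ht, hPt⟩ := Finset.exists_lt_of_sum_lt hij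
  exact Finset.sum_pos' (fun t _ => flowSum_nonneg (hA t) S)
    ⟨t, ht, flowSum_pos (hA t) hi hj (hsupp t ht i j hPt)⟩

end Irreducible

section Independence

open ProbabilityTheory

variable {Ω ι : Type*} [MeasurableSpace Ω] {μ : Measure Ω}

lemma ProbabilityTheory.iIndepFun.iIndepSet_preimage {β : Type*} [MeasurableSpace β]
    {f : ι → Ω → β} (hf : iIndepFun f μ) (hfm : ∀ i, Measurable (f i)) {s : Set β}
    (hs : MeasurableSet s) : iIndepSet (fun i => f i ⁻¹' s) μ :=
  (iIndepSet_iff_meas_biInter fun i => hfm i hs).2 fun I =>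
    hf.measure_inter_preimage_eq_mul I fun _ _ => hs

lemma ProbabilityTheory.iIndepSet.iIndepSet_biInter {A : ι → Set Ω} (h : iIndepSet A μ)
    (hA : ∀ i, MeasurableSet (A i)) {κ : Type*} {T : κ → Finset ι}
    (hT : Pairwise (Disjoint on T)) : iIndepSet (fun m => ⋂ i ∈ T m, A i) μ := by
  classical
  refine (iIndepSet_iff_meas_biInter fun m => Finset.measurableSet_biInter _ fun i _ => hA i).2
    fun s => ?_
  rw [← Finset.set_biInter_biUnion, h.meas_biInter, Finset.prod_biUnion (hT.set_pairwise _)]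
  exact Finset.prod_congr rfl fun m _ => (h.meas_biInter _).symm

lemma ProbabilityTheory.iIndepSet.pow_le_measure_biInter {A : ι → Set Ω} (h : iIndepSet A μ)
    {T : Finset ι} {c : ℝ≥0∞} (hc : c ≤ 1) (hcA : ∀ i ∈ T, c ≤ μ (A i)) {K : ℕ}
    (hK : T.card ≤ K) : c ^ K ≤ μ (⋂ i ∈ T, A i) := by
  rw [h.meas_biInter]
  calc c ^ K ≤ c ^ T.card := pow_le_pow_right_of_le_one' hc hK
    _ = ∏ _i ∈ T, c := (Finset.prod_const c).symm
    _ ≤ ∏ i ∈ T, μ (A i) := Finset.prod_le_prod' hcA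

lemma ProbabilityTheory.iIndepSet.ae_frequently_mem {s : ℕ → Set Ω} (hs : iIndepSet s μ)
    (hsm : ∀ m, MeasurableSet (s m)) {c : ℝ≥0∞} (hc : c ≠ 0) (hcs : ∀ m, c ≤ μ (s m)) :
    ∀ᵐ ω ∂μ, ∃ᶠ m in atTop, ω ∈ s m := by
  have := hs.isProbabilityMeasure
  have htop : ∑' m, μ (s m) = ∞ := top_le_iff.1 <|
    (ENNReal.tsum_const_eq_top_of_ne_zero hc).symm.trans_le (ENNReal.tsum_le_tsum hcs)
  have hlimsup := (MeasurableSet.measurableSet_limsup hsm).nullMeasurableSet (μ := μ)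
  filter_upwards [(ae_mem_iff_measure_eq hlimsup).2
    ((measure_limsup_eq_one hsm hs htop).trans measure_univ.symm)] with ω hω
  exact mem_limsup_iff_frequently_mem.1 hω

end Independence

section RandomModel

open ProbabilityTheory

variable {Ω : Type*} {n : ℕ} {R : ℕ → Fin n → Fin n → Ω → ℝ}

lemma Wof_nonneg {t : ℕ} {ω : Ω} {j : Fin n} (hR : ∀ k, 0 ≤ R t k j ω) (i : Fin n) :
    0 ≤ Wof R t ω i j :=
  div_nonneg (hR i) (Finset.sum_nonneg fun k _ => hR k)

lemma Wof_pos {t : ℕ} {ω : Ω} {i j : Fin n} (hR : ∀ k, 0 ≤ R t k j ω) (h : 0 < R t i j ω) :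
    0 < Wof R t ω i j :=
  div_pos h (h.trans_le (Finset.single_le_sum (fun k _ => hR k) (Finset.mem_univ i)))

lemma ae_frequently_support_realized [MeasurableSpace Ω] {μ : Measure Ω} {ε : ℝ} (hε : 0 < ε)
    (hε1 : ε ≤ 1) {P : ℕ → Matrix (Fin n) (Fin n) ℝ} (hPeps : ∀ t i j, P t i j ≠ 0 → ε ≤ P t i j)
    (hRmeas : ∀ t i j, Measurable (R t i j))
    (hRP : ∀ t i j, μ {ω | R t i j ω = 1} = ENNReal.ofReal (P t i j))
    (hindep : iIndepFun (fun (p : ℕ × Fin n × Fin n) ω => R p.1 p.2.1 p.2.2 ω) μ) (L : ℕ) :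
    ∀ᵐ ω ∂μ, ∃ᶠ m in atTop, ∀ t, m * L ≤ t → t < (m + 1) * L →
      ∀ i j, P t i j ≠ 0 → R t i j ω = 1 := by
  classical
  set T : ℕ → Finset (ℕ × Fin n × Fin n) := fun m =>
    (Finset.Ico (m * L) ((m + 1) * L) ×ˢ Finset.univ).filter fun p => P p.1 p.2.1 p.2.2 ≠ 0
  have hmem : ∀ m p, p ∈ T m ↔ (m * L ≤ p.1 ∧ p.1 < (m + 1) * L) ∧ P p.1 p.2.1 p.2.2 ≠ 0 := by
    simp [T]
  have hT : Pairwise (Disjoint on T) := fun m₁ m₂ hne => Finset.disjoint_left.2 fun p h₁ h₂ => by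
    obtain ⟨⟨h₁l, h₁r⟩, -⟩ := (hmem m₁ p).1 h₁
    obtain ⟨⟨h₂l, h₂r⟩, -⟩ := (hmem m₂ p).1 h₂
    exact hne ((Nat.div_eq_of_lt_le h₁l h₁r).symm.trans (Nat.div_eq_of_lt_le h₂l h₂r))
  have hcard : ∀ m, (T m).card ≤ L * (n * n) := fun m =>
    (Finset.card_filter_le _ _).trans (by simp [add_mul])
  have hevents := hindep.iIndepSet_preimage (fun p => hRmeas p.1 p.2.1 p.2.2)
    (measurableSet_singleton (1 : ℝ))
  have hAm : ∀ p : ℕ × Fin n × Fin n, MeasurableSet ((fun ω => R p.1 p.2.1 p.2.2 ω) ⁻¹' {1}) :=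
    fun p => hRmeas p.1 p.2.1 p.2.2 (measurableSet_singleton 1)
  have hε' : ENNReal.ofReal ε ≤ 1 := ENNReal.ofReal_le_one.2 hε1
  filter_upwards [(hevents.iIndepSet_biInter hAm hT).ae_frequently_mem
    (fun m => Finset.measurableSet_biInter _ fun p _ => hAm p)
    (pow_ne_zero _ (ENNReal.ofReal_pos.2 hε).ne')
    fun m => hevents.pow_le_measure_biInter hε' (fun p hp => (hRP _ _ _).symm ▸
      ENNReal.ofReal_le_ofReal (hPeps _ _ _ ((hmem m p).1 hp).2)) (hcard m)] with ω hω
  refine hω.mono fun m hm t htl htr i j hP => ?_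
  simpa using Set.mem_iInter₂.1 hm (t, i, j) ((hmem m _).2 ⟨⟨htl, htr⟩, hP⟩)

end RandomModel

theorem random_model_ell_sum_infinite_general
    {Ω : Type*} [MeasurableSpace Ω] (μ : MeasureTheory.Measure Ω)
    {n : ℕ} (hn : 2 ≤ n) (ε : ℝ) (hε : 0 < ε) (B : ℕ) (hB : 1 ≤ B)
    (P : ℕ → Matrix (Fin n) (Fin n) ℝ)
    (hPdiag : ∀ t i, P t i i = 1)
    (hPeps : ∀ t i j, P t i j ≠ 0 → ε ≤ P t i j)
    (hPirr : ∀ t : ℕ, IrreducibleMat (∑ t' ∈ Finset.Ico (t * B) ((t + 1) * B), P t'))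
    (R : ℕ → Fin n → Fin n → Ω → ℝ)
    (hRmeas : ∀ t i j, Measurable (R t i j))
    (hR01 : ∀ t i j ω, R t i j ω = 0 ∨ R t i j ω = 1)
    (hRP : ∀ t i j, μ {ω | R t i j ω = 1} = ENNReal.ofReal (P t i j))
    (hindep : ProbabilityTheory.iIndepFun
      (m := fun _ : ℕ × Fin n × Fin n => Real.measurableSpace)
      (fun p ω => R p.1 p.2.1 p.2.2 ω) μ)
    :
    ∀ᵐ ω ∂μ, Filter.Tendsto
      (fun Q => ∑ q ∈ Finset.Icc 1 Q, 1 / (n : ℝ) ^ (ellSeq (fun t => Wof R t ω) q))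
      Filter.atTop Filter.atTop := by
  have hn0 : 0 < n := by omega
  have hε1 : ε ≤ 1 := by simpa [hPdiag] using hPeps 0 ⟨0, hn0⟩ ⟨0, hn0⟩ (by simp [hPdiag])
  have hR0 : ∀ t i j ω, 0 ≤ R t i j ω := fun t i j ω => by
    rcases hR01 t i j ω with h | h <;> simp [h]
  filter_upwards [ae_frequently_support_realized hε hε1 hPeps hRmeas hRP hindep (2 * n * B)]
    with ω hω
  have hW : ∀ t i j, 0 ≤ Wof R t ω i j := fun t i j => Wof_nonneg (fun k => hR0 t k j ω) i
  have hgood : ∃ᶠ c in atTop, ∀ j < 2 * n,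
      CrossesAllCuts (fun t => Wof R t ω) ((c + j) * B) ((c + j + 1) * B) := by
    rw [frequently_atTop] at hω ⊢
    intro a
    obtain ⟨m, ham, hm⟩ := hω a
    refine ⟨2 * n * m, by nlinarith, fun j hj => crossesAllCuts_of_irreducible hW (hPirr _)
      fun t ht i k hP => Wof_pos (fun l => hR0 t l k ω) ?_⟩
    rw [Finset.mem_Ico] at ht
    rw [hm t (by nlinarith) (by nlinarith) i k hP.ne']
    exact one_pos
  have hn1 : (1 : ℝ) ≤ n := by exact_mod_cast hn0
  refine tendsto_sum_Icc_atTop_of_frequently_le (fun q => by positivity)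
    (by positivity : (0 : ℝ) < 1 / (n : ℝ) ^ (2 * n * B)) ?_
  exact (frequently_ellSeq_le hW hn0 hB hgood).mono fun q hq =>
    one_div_le_one_div_of_le (by positivity) (pow_le_pow_right₀ hn1 hq)

/-- In the random model, the pathwise sequence `{ℓ_q}` satisfies
`∑_q 1/n^{ℓ_q} = ∞` almost surely. -/
theorem random_model_ell_sum_infinite
    {Ω : Type*} [MeasurableSpace Ω] (μ : MeasureTheory.Measure Ω)
    [MeasureTheory.IsProbabilityMeasure μ]
    {n : ℕ} (hn : 2 ≤ n) (ε : ℝ) (hε : 0 < ε) (B : ℕ) (hB : 1 ≤ B)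
    (P : ℕ → Matrix (Fin n) (Fin n) ℝ)
    (hP01 : ∀ t i j, P t i j ∈ Set.Icc (0:ℝ) 1)
    (hPdiag : ∀ t i, P t i i = 1)
    (hPeps : ∀ t i j, P t i j ≠ 0 → ε ≤ P t i j)
    (hPirr : ∀ t : ℕ, IrreducibleMat (∑ t' ∈ Finset.Ico (t * B) ((t + 1) * B), P t'))
    (R : ℕ → Fin n → Fin n → Ω → ℝ)
    (hRmeas : ∀ t i j, Measurable (R t i j))
    (hR01 : ∀ t i j ω, R t i j ω = 0 ∨ R t i j ω = 1)
    (hRP : ∀ t i j, μ {ω | R t i j ω = 1} = ENNReal.ofReal (P t i j))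
    (hindep : ProbabilityTheory.iIndepFun
      (m := fun _ : ℕ × Fin n × Fin n => Real.measurableSpace)
      (fun p ω => R p.1 p.2.1 p.2.2 ω) μ)
    :
    ∀ᵐ ω ∂μ, Filter.Tendsto
      (fun Q => ∑ q ∈ Finset.Icc 1 Q, 1 / (n : ℝ) ^ (ellSeq (fun t => Wof R t ω) q))
      Filter.atTop Filter.atTop :=
  random_model_ell_sum_infinite_general μ hn ε hε B hB P hPdiag hPeps hPirr R hRmeas hR01 hRP hindep
end

section
/- In the random model with B-irreducible probability matrices, let p = ε^{2(n−1)} and consider the push-sum iterates. Then for every i ∈ [n] and every t ≥ 0, E[ln(1/y_i(t))] ≤ ln(n) · (nB/p + B). -/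
open Finset MeasureTheory

/-!
A node keeps at least a `1/n` share of its weight at every step and passes at least a `1/n` share
along every realized edge. Hence if every node reaches `i` along realized edges between times `s`
and `t`, then `y_i(t) ≥ n ^ (-(t - s))`, since some node holds weight at least `1` at time `s`.

B-irreducibility yields, in any `n - 1` consecutive blocks, a spanning tree of edges into `i`, one
edge per block, each realized with probability at least `ε`. Cut the blocks before time `t` into
runs of `n - 1` blocks, counted backwards from `t`: the runs succeed independently, each with
probability at least `ε ^ (n - 1) ≥ p`. If the `l`-th run is the first success, then
`ln (1 / y_i(t)) ≤ (l (n - 1) B + B) ln n`, and `l` has mean at most `1 / ε ^ (n - 1)`.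
-/

theorem Nat.sub_div_sub_mul_lt {t B m : ℕ} (hB : 0 < B) (hm : m ≤ t / B) :
    t - (t / B - m) * B < (m + 1) * B := by
  have h₁ := Nat.lt_div_mul_add (a := t) hB
  have h₂ : m * B ≤ t / B * B := Nat.mul_le_mul_right B hm
  rw [Nat.sub_mul, add_mul, one_mul]
  omega

theorem Nat.lt_div_div_add_one_mul_mul {t B u : ℕ} (hB : 0 < B) (hu : 0 < u) :
    t < (t / B / u + 1) * u * B := by
  have h₁ := Nat.lt_div_mul_add (a := t) hB
  have h₂ := Nat.lt_div_mul_add (a := t / B) hu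
  nlinarith

theorem Real.log_one_div_le_of_inv_pow_le {x y : ℝ} {k : ℕ} (hx : 0 < x) (h : x⁻¹ ^ k ≤ y) :
    Real.log (1 / y) ≤ k * Real.log x := by
  have := Real.log_le_log (by positivity) h
  rw [Real.log_pow, Real.log_inv] at this
  rw [one_div, Real.log_inv]
  linarith

/-- `(τ, c, a) ∈ T` is an edge from `a` to `c` at time `τ`, matching the entry `W τ c a`. -/
inductive TemporalReach {α : Type*} (T : Set (ℕ × α × α)) (j : α) (s : ℕ) : α → ℕ → Prop
  | refl : TemporalReach T j s j s
  | wait {a : α} {τ : ℕ} : TemporalReach T j s a τ → TemporalReach T j s a (τ + 1)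
  | move {a c : α} {τ : ℕ} : TemporalReach T j s a τ → (τ, c, a) ∈ T →
      TemporalReach T j s c (τ + 1)

namespace TemporalReach

variable {α : Type*} {T T' : Set (ℕ × α × α)} {j a i : α} {s u t : ℕ}

theorem le (h : TemporalReach T j s a t) : s ≤ t := by
  induction h <;> omega

theorem wait_until (h : TemporalReach T j s a u) (hut : u ≤ t) : TemporalReach T j s a t := by
  induction hut with
  | refl => exact h
  | step _ ih => exact ih.wait

theorem trans (h₁ : TemporalReach T j s a u) (h₂ : TemporalReach T a u i t) :
    TemporalReach T j s i t := by
  induction h₂ with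
  | refl => exact h₁
  | wait _ ih => exact ih.wait
  | move _ hT ih => exact ih.move hT

theorem mono (h : TemporalReach T j s i t) (hT : T ⊆ T') : TemporalReach T' j s i t := by
  induction h with
  | refl => exact refl
  | wait _ ih => exact ih.wait
  | move _ hq ih => exact ih.move (hT hq)

end TemporalReach

section PushSum

variable {n : ℕ} {W : ℕ → Matrix (Fin n) (Fin n) ℝ} {u₀ : Fin n → ℝ}

theorem pushIter_succ_apply (t : ℕ) (c : Fin n) :
    pushIter W u₀ (t + 1) c = ∑ a, W t c a * pushIter W u₀ t a := rfl

theorem pushIter_nonneg (hW : ∀ τ a b, 0 ≤ W τ a b) (hu₀ : ∀ a, 0 ≤ u₀ a) (t : ℕ) (a : Fin n) :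
    0 ≤ pushIter W u₀ t a := by
  induction t generalizing a with
  | zero => exact hu₀ a
  | succ t ih =>
    rw [pushIter_succ_apply]
    exact sum_nonneg fun b _ => mul_nonneg (hW t a b) (ih b)

theorem mul_le_pushIter_succ (hW : ∀ τ a b, 0 ≤ W τ a b) (hu₀ : ∀ a, 0 ≤ u₀ a) (t : ℕ)
    (c a : Fin n) : W t c a * pushIter W u₀ t a ≤ pushIter W u₀ (t + 1) c := by
  rw [pushIter_succ_apply]
  exact single_le_sum (f := fun b => W t c b * pushIter W u₀ t b)
    (fun b _ => mul_nonneg (hW t c b) (pushIter_nonneg hW hu₀ t b)) (mem_univ a)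

theorem sum_pushIter (hW : ∀ τ, ColStochastic (W τ)) (t : ℕ) :
    ∑ a, pushIter W u₀ t a = ∑ a, u₀ a := by
  induction t with
  | zero => rfl
  | succ t ih =>
    simp_rw [pushIter_succ_apply]
    rw [sum_comm]
    simp_rw [← sum_mul, (hW t).2, one_mul, ih]

theorem pow_mul_le_pushIter_of_temporalReach {δ : ℝ} {T : Set (ℕ × Fin n × Fin n)}
    (hW : ∀ τ a b, 0 ≤ W τ a b) (hu₀ : ∀ a, 0 ≤ u₀ a) (hδ : 0 ≤ δ)
    (hdiag : ∀ τ a, δ ≤ W τ a a) (hT : ∀ q ∈ T, δ ≤ W q.1 q.2.1 q.2.2)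
    {j i : Fin n} {s t : ℕ} (h : TemporalReach T j s i t) :
    δ ^ (t - s) * pushIter W u₀ s j ≤ pushIter W u₀ t i := by
  have step : ∀ {a c : Fin n} {τ : ℕ}, s ≤ τ → δ ≤ W τ c a →
      δ ^ (τ - s) * pushIter W u₀ s j ≤ pushIter W u₀ τ a →
      δ ^ (τ + 1 - s) * pushIter W u₀ s j ≤ pushIter W u₀ (τ + 1) c := by
    intro a c τ hsτ hδW ih
    calc δ ^ (τ + 1 - s) * pushIter W u₀ s j = δ * (δ ^ (τ - s) * pushIter W u₀ s j) := by
          rw [Nat.sub_add_comm hsτ, pow_succ]; ring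
      _ ≤ W τ c a * pushIter W u₀ τ a :=
          mul_le_mul hδW ih
            (mul_nonneg (pow_nonneg hδ _) (pushIter_nonneg hW hu₀ s j)) (hδ.trans hδW)
      _ ≤ pushIter W u₀ (τ + 1) c := mul_le_pushIter_succ hW hu₀ τ c a
  induction h with
  | refl => simp
  | wait h ih => exact step h.le (hdiag _ _) ih
  | move h hq ih => exact step h.le (hT _ hq) ih

end PushSum

section RandomPushSum

variable {n : ℕ} {Ω : Type*} {R : ℕ → Fin n → Fin n → Ω → ℝ}

noncomputable abbrev pushSumY (R : ℕ → Fin n → Fin n → Ω → ℝ) (ω : Ω) : ℕ → Fin n → ℝ :=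
  pushIter (fun s => Wof R s ω) (fun _ => 1)

theorem measurable_pushSumY [MeasurableSpace Ω] (hR : ∀ t i j, Measurable (R t i j)) (t : ℕ)
    (a : Fin n) : Measurable fun ω => pushSumY R ω t a := by
  induction t generalizing a with
  | zero => exact measurable_const
  | succ t ih =>
    simp_rw [pushIter_succ_apply, Wof]
    fun_prop

variable {ω : Ω} (h01 : ∀ τ a b, R τ a b ω = 0 ∨ R τ a b ω = 1)
include h01

theorem R_nonneg (τ : ℕ) (a b : Fin n) : 0 ≤ R τ a b ω := by
  rcases h01 τ a b with h | h <;> simp [h]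

theorem sum_R_le (τ : ℕ) (b : Fin n) : ∑ k, R τ k b ω ≤ n := by
  calc ∑ k, R τ k b ω ≤ ∑ _k : Fin n, (1 : ℝ) :=
        sum_le_sum fun k _ => by rcases h01 τ k b with h | h <;> simp [h]
    _ = n := by simp

variable (hdiag : ∀ τ k, R τ k k ω = 1)
include hdiag

theorem one_le_sum_R (τ : ℕ) (b : Fin n) : 1 ≤ ∑ k, R τ k b ω :=
  hdiag τ b ▸ single_le_sum (f := fun k => R τ k b ω) (fun k _ => R_nonneg h01 τ k b) (mem_univ b)

theorem colStochastic_Wof (τ : ℕ) : ColStochastic (Wof R τ ω) := by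
  have hpos b : 0 < ∑ k, R τ k b ω := one_pos.trans_le (one_le_sum_R h01 hdiag τ b)
  refine ⟨fun a b => div_nonneg (R_nonneg h01 τ a b) (hpos b).le, fun b => ?_⟩
  simp only [Wof, ← sum_div]
  exact div_self (hpos b).ne'

theorem inv_le_Wof {τ : ℕ} {a b : Fin n} (hab : R τ a b ω = 1) : (n : ℝ)⁻¹ ≤ Wof R τ ω a b := by
  rw [Wof, hab, one_div]
  exact inv_anti₀ (one_pos.trans_le (one_le_sum_R h01 hdiag τ b)) (sum_R_le h01 τ b)

theorem pushSumY_nonneg (t : ℕ) (a : Fin n) : 0 ≤ pushSumY R ω t a :=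
  pushIter_nonneg (fun τ => (colStochastic_Wof h01 hdiag τ).1) (fun _ => zero_le_one) t a

theorem sum_pushSumY (t : ℕ) : ∑ a, pushSumY R ω t a = n := by
  simp [sum_pushIter (colStochastic_Wof h01 hdiag)]

theorem pushSumY_le (t : ℕ) (a : Fin n) : pushSumY R ω t a ≤ n :=
  sum_pushSumY h01 hdiag t ▸
    single_le_sum (fun b _ => pushSumY_nonneg h01 hdiag t b) (mem_univ a)

theorem exists_one_le_pushSumY (hn : 0 < n) (t : ℕ) : ∃ a, 1 ≤ pushSumY R ω t a := by
  by_contra! h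
  have : ∑ a, pushSumY R ω t a < ∑ _a : Fin n, (1 : ℝ) :=
    sum_lt_sum_of_nonempty (univ_nonempty_iff.2 (Fin.pos_iff_nonempty.1 hn)) fun a _ => h a
  simp [sum_pushSumY h01 hdiag] at this

theorem inv_pow_mul_le_pushSumY {T : Set (ℕ × Fin n × Fin n)}
    (hT : ∀ q ∈ T, R q.1 q.2.1 q.2.2 ω = 1) {j i : Fin n} {s t : ℕ}
    (h : TemporalReach T j s i t) :
    (n : ℝ)⁻¹ ^ (t - s) * pushSumY R ω s j ≤ pushSumY R ω t i :=
  pow_mul_le_pushIter_of_temporalReach (fun τ => (colStochastic_Wof h01 hdiag τ).1)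
    (fun _ => zero_le_one) (by positivity) (fun τ a => inv_le_Wof h01 hdiag (hdiag τ a))
    (fun q hq => inv_le_Wof h01 hdiag (hT q hq)) h

theorem inv_pow_le_pushSumY (t : ℕ) (i : Fin n) : (n : ℝ)⁻¹ ^ t ≤ pushSumY R ω t i := by
  simpa [pushIter] using inv_pow_mul_le_pushSumY h01 hdiag (T := ∅) (by simp)
    ((TemporalReach.refl (j := i)).wait_until (Nat.zero_le t))

theorem inv_pow_le_pushSumY_of_forall_temporalReach {T : Set (ℕ × Fin n × Fin n)}
    (hT : ∀ q ∈ T, R q.1 q.2.1 q.2.2 ω = 1) {i : Fin n} {s u t : ℕ}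
    (h : ∀ j, TemporalReach T j s i u) (hut : u ≤ t) : (n : ℝ)⁻¹ ^ (t - s) ≤ pushSumY R ω t i := by
  obtain ⟨j, hj⟩ := exists_one_le_pushSumY h01 hdiag i.pos s
  calc (n : ℝ)⁻¹ ^ (t - s) ≤ (n : ℝ)⁻¹ ^ (t - s) * pushSumY R ω s j :=
        le_mul_of_one_le_right (by positivity) hj
    _ ≤ pushSumY R ω t i := inv_pow_mul_le_pushSumY h01 hdiag hT ((h j).wait_until hut)

theorem log_one_div_pushSumY_le (t : ℕ) (i : Fin n) :
    Real.log (1 / pushSumY R ω t i) ≤ t * Real.log n :=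
  Real.log_one_div_le_of_inv_pow_le (Nat.cast_pos.2 i.pos) (inv_pow_le_pushSumY h01 hdiag t i)

theorem log_one_div_pushSumY_le_of_forall_temporalReach {T : Set (ℕ × Fin n × Fin n)}
    (hT : ∀ q ∈ T, R q.1 q.2.1 q.2.2 ω = 1) {i : Fin n} {t B m u : ℕ} (hB : 0 < B)
    (hm : m ≤ t / B) (hu : u ≤ m)
    (h : ∀ j, TemporalReach T j ((t / B - m) * B) i ((t / B - m + u) * B)) :
    Real.log (1 / pushSumY R ω t i) ≤ ((m + 1) * B : ℕ) * Real.log n := by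
  have hend : (t / B - m + u) * B ≤ t :=
    (Nat.mul_le_mul_right B (by omega)).trans (Nat.div_mul_le_self t B)
  calc Real.log (1 / pushSumY R ω t i) ≤ ((t - (t / B - m) * B : ℕ) : ℝ) * Real.log n :=
        Real.log_one_div_le_of_inv_pow_le (Nat.cast_pos.2 i.pos)
          (inv_pow_le_pushSumY_of_forall_temporalReach h01 hdiag hT h hend)
    _ ≤ ((m + 1) * B : ℕ) * Real.log n :=
        mul_le_mul_of_nonneg_right (by exact_mod_cast (Nat.sub_div_sub_mul_lt hB hm).le)
          (Real.log_nonneg (by exact_mod_cast i.pos))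

theorem abs_log_one_div_pushSumY_le (t : ℕ) (i : Fin n) :
    |Real.log (1 / pushSumY R ω t i)| ≤ (t + 1) * Real.log n := by
  have hn : (0 : ℝ) < n := Nat.cast_pos.2 i.pos
  have hlogn : 0 ≤ Real.log n := Real.log_nonneg (by exact_mod_cast i.pos)
  have hy := (by positivity : (0 : ℝ) < (n : ℝ)⁻¹ ^ t).trans_le (inv_pow_le_pushSumY h01 hdiag t i)
  have upper := log_one_div_pushSumY_le h01 hdiag t i
  have lower : -Real.log n ≤ Real.log (1 / pushSumY R ω t i) := by
    rw [one_div, Real.log_inv, neg_le_neg_iff]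
    exact Real.log_le_log hy (pushSumY_le h01 hdiag t i)
  rw [abs_le]
  constructor <;> nlinarith

end RandomPushSum

theorem integrable_log_one_div_pushSumY {n : ℕ} {Ω : Type*} [MeasurableSpace Ω] {μ : Measure Ω}
    [IsFiniteMeasure μ] {R : ℕ → Fin n → Fin n → Ω → ℝ} (hRmeas : ∀ t i j, Measurable (R t i j))
    (hR01 : ∀ t i j ω, R t i j ω = 0 ∨ R t i j ω = 1)
    (hdiag : ∀ᵐ ω ∂μ, ∀ τ k, R τ k k ω = 1) (t : ℕ) (i : Fin n) :
    Integrable (fun ω => Real.log (1 / pushSumY R ω t i)) μ := by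
  refine Integrable.mono' (integrable_const ((t + 1) * Real.log n)) ?_ ?_
  · exact (Real.measurable_log.comp (measurable_const.div
      (measurable_pushSumY hRmeas t i))).aestronglyMeasurable
  · filter_upwards [hdiag] with ω hω
    exact abs_log_one_div_pushSumY_le (hR01 · · · ω) hω t i

theorem IrreducibleMat.exists_pos_into {n : ℕ} {M : Matrix (Fin n) (Fin n) ℝ}
    (hM : IrreducibleMat M) {S : Finset (Fin n)} {a₀ c₀ : Fin n} (ha₀ : a₀ ∉ S) (hc₀ : c₀ ∈ S) :
    ∃ a ∉ S, ∃ c ∈ S, 0 < M c a := by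
  induction hM a₀ c₀ with
  | refl => exact absurd hc₀ ha₀
  | @tail b c _ hbc ih =>
    by_cases hb : b ∈ S
    · exact ih hb
    · exact ⟨b, hb, c, hc₀, hbc⟩

section TemporalTree

variable {n B : ℕ} {ε : ℝ} {P : ℕ → Matrix (Fin n) (Fin n) ℝ}
  (hPeps : ∀ t i j, P t i j ≠ 0 → ε ≤ P t i j)
  (hPirr : ∀ t : ℕ, IrreducibleMat (∑ t' ∈ Ico (t * B) ((t + 1) * B), P t'))
include hPeps hPirr

theorem exists_edge_into_of_irreducible_block (k : ℕ) {S : Finset (Fin n)} (hS : S.Nonempty)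
    (hSu : S ≠ univ) : ∃ τ ∈ Ico (k * B) ((k + 1) * B), ∃ a ∉ S, ∃ c ∈ S, ε ≤ P τ c a := by
  obtain ⟨a₀, ha₀⟩ : ∃ a, a ∉ S := by simpa [eq_univ_iff_forall] using hSu
  obtain ⟨c₀, hc₀⟩ := hS
  obtain ⟨a, ha, c, hc, hpos⟩ := (hPirr k).exists_pos_into ha₀ hc₀
  rw [Matrix.sum_apply] at hpos
  obtain ⟨τ, hτ, hτpos⟩ := exists_lt_of_sum_lt (f := fun _ => (0 : ℝ))
    (g := fun τ => P τ c a) (by simpa using hpos)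
  exact ⟨τ, hτ, a, ha, c, hc, hPeps τ c a hτpos.ne'⟩

/-- Grown backwards in time: one block earlier, one more node gets an edge into the set of
nodes that already reach `i` by the end. -/
theorem exists_temporalReach_tree (i : Fin n) (m b : ℕ) (hm : m < n) :
    ∃ A : Finset (Fin n), A.card = m + 1 ∧ ∃ T : Finset (ℕ × Fin n × Fin n), T.card ≤ m ∧
      (∀ q ∈ T, q.1 ∈ Ico (b * B) ((b + m) * B) ∧ ε ≤ P q.1 q.2.1 q.2.2) ∧
      ∀ j ∈ A, TemporalReach (T : Set (ℕ × Fin n × Fin n)) j (b * B) i ((b + m) * B) := by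
  induction m generalizing b with
  | zero => exact ⟨{i}, rfl, ∅, le_rfl, by simp, by simp [TemporalReach.refl]⟩
  | succ m ih =>
    obtain ⟨A, hAcard, T, hTcard, hT, hreach⟩ := ih (b + 1) (by omega)
    have hAu : A ≠ univ := fun h => by simp [h] at hAcard; omega
    obtain ⟨τ, hτ, a, ha, c, hc, hPτ⟩ := exists_edge_into_of_irreducible_block hPeps hPirr b
      (card_pos.1 (by omega)) hAu
    rw [mem_Ico] at hτ
    have hend : (b + (m + 1)) * B = (b + 1 + m) * B := by ring
    have hB : b * B ≤ (b + 1) * B := Nat.mul_le_mul_right B (Nat.le_succ b)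
    have hsub : (T : Set (ℕ × Fin n × Fin n)) ⊆ ↑(insert (τ, c, a) T) := by simp
    refine ⟨insert a A, by rw [card_insert_of_notMem ha, hAcard], insert (τ, c, a) T,
      (card_insert_le _ _).trans (by omega), ?_, ?_⟩
    · simp only [mem_insert, forall_eq_or_imp, mem_Ico, hend]
      refine ⟨⟨⟨hτ.1, hτ.2.trans_le (Nat.mul_le_mul_right B (by omega))⟩, hPτ⟩, fun q hq => ?_⟩
      obtain ⟨hq, hPq⟩ := hT q hq
      rw [mem_Ico] at hq
      exact ⟨⟨hB.trans hq.1, hq.2⟩, hPq⟩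
    · simp only [mem_insert, forall_eq_or_imp, hend]
      refine ⟨?_, fun j hj => (TemporalReach.refl.wait_until hB).trans ((hreach j hj).mono hsub)⟩
      exact ((((TemporalReach.refl.wait_until hτ.1).move (by simp)).wait_until hτ.2).trans
        ((hreach c hc).mono hsub))

theorem exists_spanning_temporal_tree (i : Fin n) (b : ℕ) :
    ∃ T : Finset (ℕ × Fin n × Fin n), T.card ≤ n - 1 ∧
      (∀ q ∈ T, q.1 ∈ Ico (b * B) ((b + (n - 1)) * B) ∧ ε ≤ P q.1 q.2.1 q.2.2) ∧
      ∀ j, TemporalReach (T : Set (ℕ × Fin n × Fin n)) j (b * B) i ((b + (n - 1)) * B) := by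
  obtain ⟨A, hA, T, hTcard, hT, hreach⟩ :=
    exists_temporalReach_tree hPeps hPirr i (n - 1) b (Nat.sub_lt i.pos one_pos)
  have hAu : A = univ := eq_univ_of_card A (by rw [hA, Fintype.card_fin]; have := i.pos; omega)
  exact ⟨T, hTcard, hT, fun j => hreach j (hAu ▸ mem_univ j)⟩

end TemporalTree

theorem pairwiseDisjoint_of_fst_mem_Ico {α : Type*} {T : ℕ → Finset (ℕ × α × α)}
    {β u B K : ℕ} (hK : K * u ≤ β)
    (hT : ∀ l, ∀ q ∈ T l, q.1 ∈ Ico ((β - l * u) * B) ((β - l * u + u) * B)) :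
    ((Icc 1 K : Finset ℕ) : Set ℕ).PairwiseDisjoint T := by
  have key : ∀ l l', l < l' → l' ≤ K → Disjoint (T l) (T l') := by
    intro l l' hll' hl'K
    rw [Finset.disjoint_left]
    intro q hq hq'
    have h := mem_Ico.1 (hT l q hq)
    have h' := mem_Ico.1 (hT l' q hq')
    have hu : l * u + u ≤ l' * u := by simpa [add_mul] using Nat.mul_le_mul_right u hll'
    have hl' : l' * u ≤ β := (Nat.mul_le_mul_right u hl'K).trans hK
    have : (β - l' * u + u) * B ≤ (β - l * u) * B := Nat.mul_le_mul_right B (by omega)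
    omega
  intro l hl l' hl' hne
  rcases lt_or_gt_of_ne hne with h | h
  · exact key l l' h (mem_Icc.1 hl').2
  · exact (key l' l h (mem_Icc.1 hl).2).symm


section Independence

open ProbabilityTheory Function

variable {ι κ Ω : Type*} [MeasurableSpace Ω] {μ : Measure Ω} {X : ι → Ω → ℝ}

theorem measure_setOf_forall_eq_one (hX : iIndepFun X μ) (T : Finset ι) :
    μ {ω | ∀ q ∈ T, X q ω = 1} = ∏ q ∈ T, μ {ω | X q ω = 1} := by
  have h := hX.measure_inter_preimage_eq_mul T (sets := fun _ => {1})
    (fun _ _ => measurableSet_singleton 1)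
  have hset : {ω | ∀ q ∈ T, X q ω = 1} = ⋂ q ∈ T, X q ⁻¹' {1} := by
    ext ω
    simp
  rw [hset, h]
  rfl

theorem measurableSet_setOf_forall_eq_one (hXm : ∀ q, Measurable (X q)) (T : Finset ι) :
    MeasurableSet {ω | ∀ q ∈ T, X q ω = 1} := by
  simp only [Set.ofPred_forall]
  exact Finset.measurableSet_biInter _ fun q _ => hXm q (measurableSet_singleton 1)

theorem iIndepSet_setOf_forall_eq_one (hX : iIndepFun X μ) (hXm : ∀ q, Measurable (X q))
    {T : κ → Finset ι} (hT : Pairwise (Disjoint on T)) :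
    iIndepSet (fun l => {ω | ∀ q ∈ T l, X q ω = 1}) μ := by
  classical
  refine (iIndepSet_iff_meas_biInter fun l => measurableSet_setOf_forall_eq_one hXm (T l)).2
    fun S => ?_
  have hinter : ⋂ l ∈ S, {ω | ∀ q ∈ T l, X q ω = 1} = {ω | ∀ q ∈ S.biUnion T, X q ω = 1} := by
    ext ω
    simp only [Set.mem_iInter, Set.mem_ofPred_eq, mem_biUnion]
    exact ⟨fun h q ⟨l, hl, hq⟩ => h l hl q hq, fun h l hl q hq => h q ⟨l, hl, hq⟩⟩
  rw [hinter, measure_setOf_forall_eq_one hX, prod_biUnion (hT.set_pairwise _)]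
  exact prod_congr rfl fun l _ => (measure_setOf_forall_eq_one hX (T l)).symm

theorem measure_biInter_compl_setOf_forall_eq_one (hX : iIndepFun X μ)
    (hXm : ∀ q, Measurable (X q)) {T : κ → Finset ι} {S : Finset κ}
    (hT : (S : Set κ).PairwiseDisjoint T) :
    μ (⋂ l ∈ S, {ω | ∀ q ∈ T l, X q ω = 1}ᶜ) = ∏ l ∈ S, μ {ω | ∀ q ∈ T l, X q ω = 1}ᶜ := by
  have h := (iIndepSet_iff _ μ).1 (iIndepSet_setOf_forall_eq_one hX hXm (T := fun l : S => T l)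
    fun l l' hll' => hT l.2 l'.2 (Subtype.coe_ne_coe.2 hll')) (univ : Finset S)
    (f := fun l => {ω | ∀ q ∈ T l, X q ω = 1}ᶜ)
    fun l _ => (MeasurableSpace.measurableSet_generateFrom (Set.mem_singleton _)).compl
  rw [← prod_coe_sort S, ← h]
  congr 1
  ext ω
  simp

theorem pow_card_le_measureReal_setOf_forall_eq_one (hX : iIndepFun X μ) {p : ι → ℝ}
    (hXp : ∀ q, μ {ω | X q ω = 1} = ENNReal.ofReal (p q)) {ε : ℝ} (hε : 0 ≤ ε) {T : Finset ι}
    (hT : ∀ q ∈ T, ε ≤ p q) : ε ^ T.card ≤ μ.real {ω | ∀ q ∈ T, X q ω = 1} := by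
  rw [measureReal_def, measure_setOf_forall_eq_one hX, ENNReal.toReal_prod, ← prod_const]
  refine prod_le_prod (fun _ _ => hε) fun q hq => ?_
  rw [hXp, ENNReal.toReal_ofReal (hε.trans (hT q hq))]
  exact hT q hq

theorem measureReal_biInter_compl_setOf_forall_eq_one_le [IsProbabilityMeasure μ]
    (hX : iIndepFun X μ) (hXm : ∀ q, Measurable (X q)) {T : κ → Finset ι} {S : Finset κ}
    (hT : (S : Set κ).PairwiseDisjoint T) {r : ℝ}
    (hr : ∀ l ∈ S, r ≤ μ.real {ω | ∀ q ∈ T l, X q ω = 1}) :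
    μ.real (⋂ l ∈ S, {ω | ∀ q ∈ T l, X q ω = 1}ᶜ) ≤ (1 - r) ^ S.card := by
  rw [measureReal_def, measure_biInter_compl_setOf_forall_eq_one hX hXm hT, ENNReal.toReal_prod,
    ← prod_const]
  refine prod_le_prod (fun _ _ => ENNReal.toReal_nonneg) fun l hl => ?_
  rw [← measureReal_def, probReal_compl_eq_one_sub (measurableSet_setOf_forall_eq_one hXm (T l))]
  linarith [hr l hl]

end Independence

section GeometricTrials

variable {Ω : Type*} {E : ℕ → Set Ω} {K : ℕ}

theorem natCast_le_sum_indicator_of_forall_lt_mem {F : ℕ → Set Ω} {ω : Ω} {m : ℕ}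
    (hm : m ≤ K + 1) (h : ∀ k < m, ω ∈ F k) :
    (m : ℝ) ≤ ∑ k ∈ range (K + 1), (F k).indicator 1 ω := by
  calc (m : ℝ) = ∑ k ∈ range m, (F k).indicator 1 ω := by
        rw [sum_congr rfl fun k hk => Set.indicator_of_mem (h k (mem_range.1 hk)) _]
        simp
    _ ≤ ∑ k ∈ range (K + 1), (F k).indicator 1 ω :=
        sum_le_sum_of_subset_of_nonneg (range_mono hm)
          fun k _ _ => Set.indicator_nonneg (fun _ _ => zero_le_one) ω

/-- The sum is the index of the first success among the trials `1, …, K`, or `K + 1`. -/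
theorem le_add_mul_sum_indicator_failures {ω : Ω} {x a c : ℝ} (hc : 0 ≤ c)
    (hsucc : ∀ l ∈ Icc 1 K, ω ∈ E l → x ≤ a + c * l) (hnone : x ≤ a + c * (K + 1)) :
    x ≤ a + c * ∑ k ∈ range (K + 1), (⋂ l ∈ Icc 1 k, (E l)ᶜ).indicator 1 ω := by
  classical
  by_cases hex : ∃ l, 1 ≤ l ∧ l ≤ K ∧ ω ∈ E l
  · obtain ⟨hl₁, hlK, hlE⟩ := Nat.find_spec hex
    have hfail : ∀ k < Nat.find hex, ω ∈ ⋂ l ∈ Icc 1 k, (E l)ᶜ := by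
      simp only [Set.mem_iInter, mem_Icc, Set.mem_compl_iff]
      exact fun k hk l ⟨hl1, hlk⟩ hlE' => Nat.find_min hex (by omega) ⟨hl1, by omega, hlE'⟩
    calc x ≤ a + c * (Nat.find hex : ℕ) := hsucc _ (mem_Icc.2 ⟨hl₁, hlK⟩) hlE
      _ ≤ _ := by gcongr; exact natCast_le_sum_indicator_of_forall_lt_mem (by omega) hfail
  · push Not at hex
    have hfail : ∀ k < K + 1, ω ∈ ⋂ l ∈ Icc 1 k, (E l)ᶜ := by
      simp only [Set.mem_iInter, mem_Icc, Set.mem_compl_iff]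
      exact fun k hk l ⟨hl1, hlk⟩ => hex l hl1 (by omega)
    calc x ≤ a + c * ((K + 1 : ℕ) : ℝ) := by exact_mod_cast hnone
      _ ≤ _ := by gcongr; exact natCast_le_sum_indicator_of_forall_lt_mem le_rfl hfail

variable [MeasurableSpace Ω] {μ : Measure Ω} [IsProbabilityMeasure μ]

theorem integral_le_add_div_of_measureReal_failures_le {f : Ω → ℝ} {a c q : ℝ}
    (hf : Integrable f μ) (hE : ∀ l, MeasurableSet (E l)) (hq : 0 < q) (hq₁ : q ≤ 1)
    (hc : 0 ≤ c) (hfail : ∀ k ≤ K, μ.real (⋂ l ∈ Icc 1 k, (E l)ᶜ) ≤ (1 - q) ^ k)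
    (hsucc : ∀ᵐ ω ∂μ, ∀ l ∈ Icc 1 K, ω ∈ E l → f ω ≤ a + c * l)
    (hnone : ∀ᵐ ω ∂μ, f ω ≤ a + c * (K + 1)) :
    ∫ ω, f ω ∂μ ≤ a + c / q := by
  set F : ℕ → Set Ω := fun k => ⋂ l ∈ Icc 1 k, (E l)ᶜ
  have hF k : MeasurableSet (F k) :=
    Finset.measurableSet_biInter _ fun l _ => (hE l).compl
  have hint : Integrable (fun ω => ∑ k ∈ range (K + 1), (F k).indicator (1 : Ω → ℝ) ω) μ :=
    integrable_finsetSum _ fun k _ => (integrable_const 1).indicator (hF k)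
  calc ∫ ω, f ω ∂μ ≤ ∫ ω, a + c * ∑ k ∈ range (K + 1), (F k).indicator 1 ω ∂μ := by
        refine integral_mono_ae hf ((integrable_const a).add (hint.const_mul c)) ?_
        filter_upwards [hsucc, hnone] with ω h₁ h₂
        exact le_add_mul_sum_indicator_failures hc h₁ h₂
    _ = a + c * ∑ k ∈ range (K + 1), μ.real (F k) := by
        rw [integral_add (integrable_const a) (hint.const_mul c), integral_const_mul,
          integral_finsetSum _ fun k _ => (integrable_const 1).indicator (hF k)]
        simp [integral_indicator_one (hF _)]
    _ ≤ a + c * ∑ k ∈ range (K + 1), (1 - q) ^ k := by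
        gcongr with k hk
        exact hfail k (Nat.lt_succ_iff.1 (mem_range.1 hk))
    _ ≤ a + c / q := by
        rw [range_eq_Ico, div_eq_mul_one_div]
        gcongr
        simpa using geom_sum_Ico_le_of_lt_one (sub_nonneg.2 hq₁) (by linarith) (m := 0) (n := K + 1)

end GeometricTrials

section RandomModel

open ProbabilityTheory

variable {Ω : Type*} [MeasurableSpace Ω] {μ : Measure Ω} [IsProbabilityMeasure μ] {n B : ℕ}
  {ε : ℝ} {P : ℕ → Matrix (Fin n) (Fin n) ℝ} {R : ℕ → Fin n → Fin n → Ω → ℝ}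

theorem integral_log_one_div_pushSumY_le (hn : 2 ≤ n) (hε : 0 < ε) (hε₁ : ε ≤ 1) (hB : 1 ≤ B)
    (hPeps : ∀ t i j, P t i j ≠ 0 → ε ≤ P t i j)
    (hPirr : ∀ t : ℕ, IrreducibleMat (∑ t' ∈ Ico (t * B) ((t + 1) * B), P t'))
    (hRmeas : ∀ t i j, Measurable (R t i j)) (hR01 : ∀ t i j ω, R t i j ω = 0 ∨ R t i j ω = 1)
    (hRP : ∀ t i j, μ {ω | R t i j ω = 1} = ENNReal.ofReal (P t i j))
    (hindep : iIndepFun (fun (q : ℕ × Fin n × Fin n) ω => R q.1 q.2.1 q.2.2 ω) μ)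
    (hdiag : ∀ᵐ ω ∂μ, ∀ τ k, R τ k k ω = 1) (i : Fin n) (t : ℕ) :
    ∫ ω, Real.log (1 / pushSumY R ω t i) ∂μ ≤
      Real.log n * B + Real.log n * ((n - 1) * B : ℕ) / ε ^ (n - 1) := by
  set u := n - 1
  set β := t / B
  choose T hTcard hT hreach using fun l => exists_spanning_temporal_tree hPeps hPirr i (β - l * u)
  have hrun l : ε ^ u ≤ μ.real {ω | ∀ q ∈ T l, R q.1 q.2.1 q.2.2 ω = 1} :=
    (pow_le_pow_of_le_one hε.le hε₁ (hTcard l)).trans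
      (pow_card_le_measureReal_setOf_forall_eq_one hindep (fun q => hRP q.1 q.2.1 q.2.2) hε.le
        fun q hq => (hT l q hq).2)
  have hRmeas' (q : ℕ × Fin n × Fin n) : Measurable fun ω => R q.1 q.2.1 q.2.2 ω :=
    hRmeas q.1 q.2.1 q.2.2
  refine integral_le_add_div_of_measureReal_failures_le (K := β / u)
    (E := fun l => {ω | ∀ q ∈ T l, R q.1 q.2.1 q.2.2 ω = 1})
    (integrable_log_one_div_pushSumY hRmeas hR01 hdiag t i)
    (fun l => measurableSet_setOf_forall_eq_one hRmeas' (T l))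
    (by positivity) (pow_le_one₀ hε.le hε₁) (by positivity) (fun k hk => ?_) ?_ ?_
  · have hku : k * u ≤ β := (Nat.mul_le_mul_right u hk).trans (Nat.div_mul_le_self β u)
    simpa using measureReal_biInter_compl_setOf_forall_eq_one_le hindep hRmeas'
      (pairwiseDisjoint_of_fst_mem_Ico hku fun l q hq => (hT l q hq).1) fun l _ => hrun l
  · filter_upwards [hdiag] with ω hω l hl hE
    have hlu : l * u ≤ β :=
      (Nat.mul_le_mul_right u (mem_Icc.1 hl).2).trans (Nat.div_mul_le_self β u)
    calc _ ≤ ((l * u + 1) * B : ℕ) * Real.log n :=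
          log_one_div_pushSumY_le_of_forall_temporalReach (hR01 · · · ω) hω hE (by omega) hlu
            (Nat.le_mul_of_pos_left u (mem_Icc.1 hl).1) (hreach l)
      _ = _ := by push_cast; ring
  · filter_upwards [hdiag] with ω hω
    have hlogn : 0 ≤ Real.log n := Real.log_nonneg (by exact_mod_cast i.pos)
    have hlen := Nat.lt_div_div_add_one_mul_mul (t := t) (by omega : 0 < B) (by omega : 0 < u)
    calc Real.log (1 / pushSumY R ω t i) ≤ t * Real.log n :=
          log_one_div_pushSumY_le (hR01 · · · ω) hω t i
      _ ≤ ((β / u + 1) * u * B : ℕ) * Real.log n :=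
          mul_le_mul_of_nonneg_right (by exact_mod_cast hlen.le) hlogn
      _ ≤ _ := by push_cast; nlinarith

end RandomModel

theorem random_model_expected_log_inv_y_bound_general
    {Ω : Type*} [MeasurableSpace Ω] (μ : MeasureTheory.Measure Ω)
    [MeasureTheory.IsProbabilityMeasure μ]
    {n : ℕ} (hn : 2 ≤ n) (ε : ℝ) (hε : 0 < ε) (B : ℕ) (hB : 1 ≤ B)
    (P : ℕ → Matrix (Fin n) (Fin n) ℝ)
    (hPdiag : ∀ t i, P t i i = 1)
    (hPeps : ∀ t i j, P t i j ≠ 0 → ε ≤ P t i j)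
    (hPirr : ∀ t : ℕ, IrreducibleMat (∑ t' ∈ Finset.Ico (t * B) ((t + 1) * B), P t'))
    (R : ℕ → Fin n → Fin n → Ω → ℝ)
    (hRmeas : ∀ t i j, Measurable (R t i j))
    (hR01 : ∀ t i j ω, R t i j ω = 0 ∨ R t i j ω = 1)
    (hRP : ∀ t i j, μ {ω | R t i j ω = 1} = ENNReal.ofReal (P t i j))
    (hindep : ProbabilityTheory.iIndepFun
      (m := fun _ : ℕ × Fin n × Fin n => Real.measurableSpace)
      (fun p ω => R p.1 p.2.1 p.2.2 ω) μ)
    (p : ℝ) (hp : p = ε ^ (2 * (n - 1))) :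
    ∀ (i : Fin n) (t : ℕ),
      ∫ ω, Real.log (1 / pushIter (fun s => Wof R s ω) (fun _ => 1) t i) ∂μ ≤
        Real.log n * ((n : ℝ) * B / p + (B : ℝ)) := by
  intro i t
  have hε₁ : ε ≤ 1 := hPdiag 0 i ▸ hPeps 0 i i (by simp [hPdiag])
  have hdiag : ∀ᵐ ω ∂μ, ∀ τ k, R τ k k ω = 1 :=
    ae_all_iff.2 fun τ => ae_all_iff.2 fun k =>
      (mem_ae_iff_prob_eq_one (hRmeas τ k k (measurableSet_singleton 1))).2
        ((hRP τ k k).trans (by rw [hPdiag, ENNReal.ofReal_one]))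
  have hp₀ : 0 < p := hp ▸ by positivity
  have hpε : p ≤ ε ^ (n - 1) := by
    rw [hp, two_mul, pow_add]
    exact mul_le_of_le_one_right (by positivity) (pow_le_one₀ hε.le hε₁)
  have hlen : (((n - 1) * B : ℕ) : ℝ) ≤ n * B := by
    exact_mod_cast Nat.mul_le_mul_right B (Nat.sub_le n 1)
  calc _ ≤ Real.log n * B + Real.log n * ((n - 1) * B : ℕ) / ε ^ (n - 1) :=
        integral_log_one_div_pushSumY_le hn hε hε₁ hB hPeps hPirr hRmeas hR01 hRP hindep hdiag i t
    _ ≤ Real.log n * B + Real.log n * (n * B / p) := by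
        rw [mul_div_assoc]
        gcongr
    _ = Real.log n * ((n : ℝ) * B / p + (B : ℝ)) := by ring

/-- In the random model with `p = ε^{2(n-1)}`, for all `i` and `t`,
`E[ln(1/y_i(t))] ≤ ln(n) (nB/p + B)`. -/
theorem random_model_expected_log_inv_y_bound
    {Ω : Type*} [MeasurableSpace Ω] (μ : MeasureTheory.Measure Ω)
    [MeasureTheory.IsProbabilityMeasure μ]
    {n : ℕ} (hn : 2 ≤ n) (ε : ℝ) (hε : 0 < ε) (B : ℕ) (hB : 1 ≤ B)
    (P : ℕ → Matrix (Fin n) (Fin n) ℝ)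
    (hP01 : ∀ t i j, P t i j ∈ Set.Icc (0:ℝ) 1)
    (hPdiag : ∀ t i, P t i i = 1)
    (hPeps : ∀ t i j, P t i j ≠ 0 → ε ≤ P t i j)
    (hPirr : ∀ t : ℕ, IrreducibleMat (∑ t' ∈ Finset.Ico (t * B) ((t + 1) * B), P t'))
    (R : ℕ → Fin n → Fin n → Ω → ℝ)
    (hRmeas : ∀ t i j, Measurable (R t i j))
    (hR01 : ∀ t i j ω, R t i j ω = 0 ∨ R t i j ω = 1)
    (hRP : ∀ t i j, μ {ω | R t i j ω = 1} = ENNReal.ofReal (P t i j))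
    (hindep : ProbabilityTheory.iIndepFun
      (m := fun _ : ℕ × Fin n × Fin n => Real.measurableSpace)
      (fun p ω => R p.1 p.2.1 p.2.2 ω) μ)
    (p : ℝ) (hp : p = ε ^ (2 * (n - 1))) :
    ∀ (i : Fin n) (t : ℕ),
      ∫ ω, Real.log (1 / pushIter (fun s => Wof R s ω) (fun _ => 1) t i) ∂μ ≤
        Real.log n * ((n : ℝ) * B / p + (B : ℝ)) :=
  random_model_expected_log_inv_y_bound_general μ hn ε hε B hB P hPdiag hPeps hPirr R hRmeas hR01
    hRP hindep p hp
end
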